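/- For every TeamLTL(⊆,⩔)-formula φ, let φ* be the LTL formula obtained from φ by replacing each Boolean disjunction ⩔ by ∨ and replacing each inclusion atom φ₁,…,φₙ ⊆ ψ₁,…,ψₙ by the conjunction ⋀_{j≤n} (φⱼ ↔ ψⱼ). Then: φ is not satisfiable (by any nonempty team) if and only if φ is 1-coherent and φ* is not satisfiable in the sense of LTL. Consequently (since LTL satisfiability is decidable and non-satisfiability of TeamLTL(⊆,⩔) is Π⁰₁-hard), checking whether a given TeamLTL(⊆,⩔)-formula is 1-coherent is undecidable. -/
import Mathlib


set_option maxHeartbeats 1000000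

universe u

/-- A trace over the set `α` of atomic propositions: an infinite sequence of
sets of propositions. -/
abbrev Trace (α : Type u) := ℕ → Set α

/-- LTL formulae in negation normal form. -/
inductive LTLForm (α : Type u) : Type u where
  | pos : α → LTLForm α
  | neg : α → LTLForm α
  | lor : LTLForm α → LTLForm α → LTLForm α
  | land : LTLForm α → LTLForm α → LTLForm α
  | next : LTLForm α → LTLForm α
  | luntil : LTLForm α → LTLForm α → LTLForm α
  | wuntil : LTLForm α → LTLForm α → LTLForm α

namespace LTLForm
variable {α : Type u}

/-- Standard single-trace LTL semantics. -/
def sat (t : Trace α) : ℕ → LTLForm α → Prop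
  | i, pos p => p ∈ t i
  | i, neg p => p ∉ t i
  | i, lor φ ψ => sat t i φ ∨ sat t i ψ
  | i, land φ ψ => sat t i φ ∧ sat t i ψ
  | i, next φ => sat t (i+1) φ
  | i, luntil φ ψ => ∃ k, i ≤ k ∧ sat t k ψ ∧ ∀ m, i ≤ m → m < k → sat t m φ
  | i, wuntil φ ψ => ∀ k, i ≤ k → sat t k φ ∨ ∃ m, i ≤ m ∧ m ≤ k ∧ sat t m ψ

/-- Size of an LTL formula. -/
def size : LTLForm α → ℕ
  | pos _ => 1
  | neg _ => 1
  | lor φ ψ => φ.size + ψ.size + 1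
  | land φ ψ => φ.size + ψ.size + 1
  | next φ => φ.size + 1
  | luntil φ ψ => φ.size + ψ.size + 1
  | wuntil φ ψ => φ.size + ψ.size + 1

end LTLForm

/-- Extensions of `TeamLTL` by atoms and connectives:
Boolean disjunction `⩔`, Boolean negation `∼`, inclusion atoms `⊆`,
the universal subteam quantifier `A`, the singleton subteam quantifier `A¹`
and the non-emptiness atom `∼⊥`. -/
inductive TExt : Type where
  | bdis | bneg | incl | asub | asub1 | nebot
deriving DecidableEq

/-- Formulae of TeamLTL together with all the extensions considered in the paper
(fragments are carved out via `TeamForm.exts`). -/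
inductive TeamForm (α : Type u) : Type u where
  | pos : α → TeamForm α
  | neg : α → TeamForm α
  | lor : TeamForm α → TeamForm α → TeamForm α
  | land : TeamForm α → TeamForm α → TeamForm α
  | next : TeamForm α → TeamForm α
  | luntil : TeamForm α → TeamForm α → TeamForm α
  | wuntil : TeamForm α → TeamForm α → TeamForm α
  | bdis : TeamForm α → TeamForm α → TeamForm α
  | bneg : TeamForm α → TeamForm α
  | incl : List (LTLForm α × LTLForm α) → TeamForm α
  | asub : TeamForm α → TeamForm α
  | asub1 : TeamForm α → TeamForm α
  | nebot : TeamForm α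

namespace TeamForm
variable {α : Type u}

/-- Synchronous team semantics for (extended) TeamLTL. -/
def sat : Set (Trace α) → ℕ → TeamForm α → Prop
  | T, i, pos p => ∀ t ∈ T, p ∈ t i
  | T, i, neg p => ∀ t ∈ T, p ∉ t i
  | T, i, lor φ ψ => ∃ T₁ T₂, T₁ ∪ T₂ = T ∧ sat T₁ i φ ∧ sat T₂ i ψ
  | T, i, land φ ψ => sat T i φ ∧ sat T i ψ
  | T, i, next φ => sat T (i+1) φ
  | T, i, luntil φ ψ => ∃ k, i ≤ k ∧ sat T k ψ ∧ ∀ m, i ≤ m → m < k → sat T m φ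
  | T, i, wuntil φ ψ => ∀ k, i ≤ k → sat T k φ ∨ ∃ m, i ≤ m ∧ m ≤ k ∧ sat T m ψ
  | T, i, bdis φ ψ => sat T i φ ∨ sat T i ψ
  | T, i, bneg φ => ¬ sat T i φ
  | T, i, incl ps => ∀ t ∈ T, ∃ t' ∈ T, ∀ p ∈ ps, (LTLForm.sat t i p.1 ↔ LTLForm.sat t' i p.2)
  | T, i, asub φ => ∀ S, S ⊆ T → sat S i φ
  | T, i, asub1 φ => ∀ t ∈ T, sat {t} i φ
  | T, _, nebot => T.Nonempty

/-- The collection of extensions (atoms/connectives beyond core TeamLTL)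
occurring in a formula. -/
def exts : TeamForm α → Set TExt
  | pos _ => ∅
  | neg _ => ∅
  | lor φ ψ => exts φ ∪ exts ψ
  | land φ ψ => exts φ ∪ exts ψ
  | next φ => exts φ
  | luntil φ ψ => exts φ ∪ exts ψ
  | wuntil φ ψ => exts φ ∪ exts ψ
  | bdis φ ψ => insert TExt.bdis (exts φ ∪ exts ψ)
  | bneg φ => insert TExt.bneg (exts φ)
  | incl _ => {TExt.incl}
  | asub φ => insert TExt.asub (exts φ)
  | asub1 φ => insert TExt.asub1 (exts φ)
  | nebot => {TExt.nebot}

/-- Size of an (extended) TeamLTL formula. -/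
def size : TeamForm α → ℕ
  | pos _ => 1
  | neg _ => 1
  | lor φ ψ => φ.size + ψ.size + 1
  | land φ ψ => φ.size + ψ.size + 1
  | next φ => φ.size + 1
  | luntil φ ψ => φ.size + ψ.size + 1
  | wuntil φ ψ => φ.size + ψ.size + 1
  | bdis φ ψ => φ.size + ψ.size + 1
  | bneg φ => φ.size + 1
  | incl ps => (ps.map (fun p => p.1.size + p.2.size)).sum + 1
  | asub φ => φ.size + 1
  | asub1 φ => φ.size + 1
  | nebot => 1

end TeamForm

namespace StarBlock
variable {α : Type u}

/-- Negation (in negation normal form) of an LTL formula. -/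
def ldual : LTLForm α → LTLForm α
  | .pos p => .neg p
  | .neg p => .pos p
  | .lor φ ψ => .land (ldual φ) (ldual ψ)
  | .land φ ψ => .lor (ldual φ) (ldual ψ)
  | .next φ => .next (ldual φ)
  | .luntil φ ψ => .wuntil (ldual ψ) (.land (ldual φ) (ldual ψ))
  | .wuntil φ ψ => .luntil (ldual ψ) (.land (ldual φ) (ldual ψ))

/-- `φ ↔ ψ` as an LTL formula in negation normal form. -/
def iffL (φ ψ : LTLForm α) : LTLForm α :=
  .lor (.land φ ψ) (.land (ldual φ) (ldual ψ))

/-- A tautological LTL formula `⊤ := p ∨ ¬p`. -/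
def topL [Inhabited α] : LTLForm α := .lor (.pos default) (.neg default)

/-- Big conjunction of a list of LTL formulae (`⊤` for the empty list). -/
def bigAndL [Inhabited α] : List (LTLForm α) → LTLForm α
  | [] => topL
  | [φ] => φ
  | φ :: φs => .land φ (bigAndL φs)

/-- Embedding of LTL formulae into (Team)LTL formulae. -/
def toTeam : LTLForm α → TeamForm α
  | .pos p => .pos p
  | .neg p => .neg p
  | .lor φ ψ => .lor (toTeam φ) (toTeam ψ)
  | .land φ ψ => .land (toTeam φ) (toTeam ψ)
  | .next φ => .next (toTeam φ)
  | .luntil φ ψ => .luntil (toTeam φ) (toTeam ψ)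
  | .wuntil φ ψ => .wuntil (toTeam φ) (toTeam ψ)

/-- The translation `φ ↦ φ*` from `TeamLTL(⊆,⩔)` to LTL: replace each Boolean
disjunction `⩔` by `∨`, and each inclusion atom `φ₁,…,φₙ ⊆ ψ₁,…,ψₙ` by the
conjunction `⋀_{j≤n} (φⱼ ↔ ψⱼ)`.
(The clauses for connectives outside of `TeamLTL(⊆,⩔)` are irrelevant.) -/
def star [Inhabited α] : TeamForm α → LTLForm α
  | .pos p => .pos p
  | .neg p => .neg p
  | .lor φ ψ => .lor (star φ) (star ψ)
  | .land φ ψ => .land (star φ) (star ψ)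
  | .next φ => .next (star φ)
  | .luntil φ ψ => .luntil (star φ) (star ψ)
  | .wuntil φ ψ => .wuntil (star φ) (star ψ)
  | .bdis φ ψ => .lor (star φ) (star ψ)
  | .incl ps => bigAndL (ps.map fun p => iffL p.1 p.2)
  | .bneg φ => star φ
  | .asub φ => star φ
  | .asub1 φ => star φ
  | .nebot => topL

/-- A formula is 1-coherent if its satisfaction by a team is equivalent to its
satisfaction by all singleton subteams. -/
def OneCoherent (φ : TeamForm α) : Prop :=
  ∀ (T : Set (Trace α)) (i : ℕ),
    TeamForm.sat T i φ ↔ ∀ t ∈ T, TeamForm.sat {t} i φ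

end StarBlock

namespace Stmt9
open StarBlock
variable {α : Type u}

-- AUX LEMMAS

private lemma ldual_sat (t : Trace α) (φ : LTLForm α) : ∀ i,
    LTLForm.sat t i (ldual φ) ↔ ¬ LTLForm.sat t i φ := by
  induction φ with
  | pos p => intro i; simp [ldual, LTLForm.sat]
  | neg p => intro i; simp [ldual, LTLForm.sat]
  | lor φ ψ ih1 ih2 => intro i; simp [ldual, LTLForm.sat, ih1, ih2]
  | land φ ψ ih1 ih2 => intro i; simp [ldual, LTLForm.sat, ih1, ih2]; tauto
  | next φ ih => intro i; simp [ldual, LTLForm.sat, ih]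
  | luntil φ ψ ih1 ih2 =>
      intro i
      simp only [ldual, LTLForm.sat, ih1, ih2]
      constructor
      · rintro h ⟨k, hik, hψ, hall⟩
        rcases h k hik with h1 | ⟨m, h1, h2, h3, h4⟩
        · exact h1 hψ
        · rcases lt_or_eq_of_le h2 with hm | rfl
          · exact h3 (hall m h1 hm)
          · exact h4 hψ
      · intro h k hik
        by_cases hp : ∃ m, i ≤ m ∧ m ≤ k ∧ LTLForm.sat t m ψ
        · classical
          have hfs := Nat.find_spec hp
          set m₀ := Nat.find hp with hm₀
          obtain ⟨h1, h2, h3⟩ := hfs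
          have hmin : ∀ j, i ≤ j → j < m₀ → ¬ LTLForm.sat t j ψ := by
            intro j hij hj hψj
            exact Nat.find_min hp hj ⟨hij, le_trans (le_of_lt hj) h2, hψj⟩
          have : ¬ (LTLForm.sat t m₀ ψ ∧ ∀ m, i ≤ m → m < m₀ → LTLForm.sat t m φ) := by
            intro ⟨ha, hb⟩
            exact h ⟨m₀, h1, ha, hb⟩
          have : ∃ m, i ≤ m ∧ m < m₀ ∧ ¬ LTLForm.sat t m φ := by
            by_contra hc
            push_neg at hc
            exact this ⟨h3, fun m hm1 hm2 => hc m hm1 hm2⟩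
          obtain ⟨m, hm1, hm2, hm3⟩ := this
          exact Or.inr ⟨m, hm1, le_trans (le_of_lt hm2) h2, hm3, hmin m hm1 hm2⟩
        · push_neg at hp
          exact Or.inl (hp k hik le_rfl)
  | wuntil φ ψ ih1 ih2 =>
      intro i
      simp only [ldual, LTLForm.sat, ih1, ih2]
      constructor
      · rintro ⟨k, hik, ⟨hφ, hψ⟩, hall⟩ h
        rcases h k hik with h1 | ⟨m, h1, h2, h3⟩
        · exact hφ h1
        · rcases lt_or_eq_of_le h2 with hm | rfl
          · exact hall m h1 hm h3
          · exact hψ h3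
      · intro h
        push_neg at h
        obtain ⟨k, hik, hφk, hall⟩ := h
        exact ⟨k, hik, ⟨hφk, hall k hik le_rfl⟩, fun m h1 h2 => hall m h1 (le_of_lt h2)⟩

private lemma topL_sat [Inhabited α] (t : Trace α) (i : ℕ) :
    LTLForm.sat t i (topL : LTLForm α) := by
  simp only [topL, LTLForm.sat]
  exact em _

private lemma iffL_sat (t : Trace α) (φ ψ : LTLForm α) (i : ℕ) :
    LTLForm.sat t i (iffL φ ψ) ↔ (LTLForm.sat t i φ ↔ LTLForm.sat t i ψ) := by
  simp only [iffL, LTLForm.sat, ldual_sat]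
  tauto

private lemma bigAndL_sat [Inhabited α] (t : Trace α) (i : ℕ) :
    ∀ (l : List (LTLForm α)), LTLForm.sat t i (bigAndL l) ↔ ∀ φ ∈ l, LTLForm.sat t i φ
  | [] => by simpa [bigAndL] using topL_sat t i
  | [φ] => by simp [bigAndL]
  | φ :: ψ :: l => by
      simp only [bigAndL, LTLForm.sat, bigAndL_sat t i (ψ :: l)]
      simp only [List.mem_cons, forall_eq_or_imp]

/-- shift of a trace by `j` steps -/
private def sh (j : ℕ) (t : Trace α) : Trace α := fun n => t (n + j)

private lemma ltl_shift (j : ℕ) (t : Trace α) (φ : LTLForm α) : ∀ i,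
    LTLForm.sat (sh j t) i φ ↔ LTLForm.sat t (i + j) φ := by
  induction φ with
  | pos p => intro i; simp [sh, LTLForm.sat]
  | neg p => intro i; simp [sh, LTLForm.sat]
  | lor φ ψ ih1 ih2 => intro i; simp [LTLForm.sat, ih1, ih2]
  | land φ ψ ih1 ih2 => intro i; simp [LTLForm.sat, ih1, ih2]
  | next φ ih =>
      intro i
      have : i + 1 + j = i + j + 1 := by omega
      simp [LTLForm.sat, ih, this]
  | luntil φ ψ ih1 ih2 =>
      intro i
      simp only [LTLForm.sat]
      constructor
      · rintro ⟨k, hik, hψ, hall⟩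
        refine ⟨k + j, by omega, (ih2 k).mp hψ, ?_⟩
        intro m h1 h2
        have hm : m - j + j = m := by omega
        have := (ih1 (m - j)).mp (hall (m - j) (by omega) (by omega))
        rwa [hm] at this
      · rintro ⟨k, hik, hψ, hall⟩
        refine ⟨k - j, by omega, ?_, ?_⟩
        · have hk : k - j + j = k := by omega
          rw [ih2, hk]; exact hψ
        · intro m h1 h2
          rw [ih1]
          exact hall (m + j) (by omega) (by omega)
  | wuntil φ ψ ih1 ih2 =>
      intro i
      simp only [LTLForm.sat]
      constructor
      · intro h k hik
        rcases h (k - j) (by omega) with h1 | ⟨m, h1, h2, h3⟩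
        · left
          have hk : k - j + j = k := by omega
          rw [ih1, hk] at h1; exact h1
        · right
          exact ⟨m + j, by omega, by omega, (ih2 m).mp h3⟩
      · intro h k hik
        rcases h (k + j) (by omega) with h1 | ⟨m, h1, h2, h3⟩
        · left; exact (ih1 k).mpr h1
        · right
          refine ⟨m - j, by omega, by omega, ?_⟩
          have hm : m - j + j = m := by omega
          rw [ih2, hm]; exact h3

private lemma frag_notmem :
    TExt.bneg ∉ ({TExt.incl, TExt.bdis} : Set TExt) ∧
    TExt.asub ∉ ({TExt.incl, TExt.bdis} : Set TExt) ∧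
    TExt.asub1 ∉ ({TExt.incl, TExt.bdis} : Set TExt) ∧
    TExt.nebot ∉ ({TExt.incl, TExt.bdis} : Set TExt) := by
  refine ⟨?_, ?_, ?_, ?_⟩ <;> simp

/-- Shift lemma for teams, for the fragment. -/
private lemma team_shift (j : ℕ) (φ : TeamForm α)
    (hφ : φ.exts ⊆ {TExt.incl, TExt.bdis}) :
    ∀ (T : Set (Trace α)) (i : ℕ), TeamForm.sat T (i + j) φ → TeamForm.sat (sh j '' T) i φ := by
  induction φ with
  | pos p =>
      rintro T i h s ⟨t, ht, rfl⟩
      exact h t ht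
  | neg p =>
      rintro T i h s ⟨t, ht, rfl⟩
      exact h t ht
  | lor φ ψ ih1 ih2 =>
      rintro T i ⟨T₁, T₂, rfl, h1, h2⟩
      have hu : φ.exts ⊆ {TExt.incl, TExt.bdis} :=
        fun x hx => hφ (Set.mem_union_left _ hx)
      have hv : ψ.exts ⊆ {TExt.incl, TExt.bdis} :=
        fun x hx => hφ (Set.mem_union_right _ hx)
      exact ⟨sh j '' T₁, sh j '' T₂, (Set.image_union _ _ _).symm,
        ih1 hu T₁ i h1, ih2 hv T₂ i h2⟩
  | land φ ψ ih1 ih2 =>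
      rintro T i ⟨h1, h2⟩
      exact ⟨ih1 (fun x hx => hφ (Set.mem_union_left _ hx)) T i h1,
        ih2 (fun x hx => hφ (Set.mem_union_right _ hx)) T i h2⟩
  | next φ ih =>
      intro T i h
      have : i + 1 + j = i + j + 1 := by omega
      exact ih hφ T (i + 1) (by rw [this]; exact h)
  | luntil φ ψ ih1 ih2 =>
      rintro T i ⟨k, hik, h1, h2⟩
      refine ⟨k - j, by omega, ?_, ?_⟩
      · have hk : k - j + j = k := by omega
        exact ih2 (fun x hx => hφ (Set.mem_union_right _ hx)) T (k - j) (by rw [hk]; exact h1)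
      · intro m hm1 hm2
        exact ih1 (fun x hx => hφ (Set.mem_union_left _ hx)) T m (h2 (m + j) (by omega) (by omega))
  | wuntil φ ψ ih1 ih2 =>
      intro T i h k hik
      rcases h (k + j) (by omega) with h1 | ⟨m, h1, h2, h3⟩
      · exact Or.inl (ih1 (fun x hx => hφ (Set.mem_union_left _ hx)) T k h1)
      · refine Or.inr ⟨m - j, by omega, by omega, ?_⟩
        have hm : m - j + j = m := by omega
        exact ih2 (fun x hx => hφ (Set.mem_union_right _ hx)) T (m - j) (by rw [hm]; exact h3)
  | bdis φ ψ ih1 ih2 =>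
      intro T i h
      have hsub : φ.exts ∪ ψ.exts ⊆ {TExt.incl, TExt.bdis} :=
        fun x hx => hφ (Set.mem_insert_of_mem _ hx)
      rcases h with h | h
      · exact Or.inl (ih1 (fun x hx => hsub (Set.mem_union_left _ hx)) T i h)
      · exact Or.inr (ih2 (fun x hx => hsub (Set.mem_union_right _ hx)) T i h)
  | bneg φ ih =>
      exact absurd (hφ (Set.mem_insert _ _)) frag_notmem.1
  | incl ps =>
      rintro T i h s ⟨t, ht, rfl⟩
      obtain ⟨t', ht', hp⟩ := h t ht
      refine ⟨sh j t', ⟨t', ht', rfl⟩, ?_⟩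
      intro p hp'
      rw [ltl_shift, ltl_shift]
      exact hp p hp'
  | asub φ ih =>
      exact absurd (hφ (Set.mem_insert _ _)) frag_notmem.2.1
  | asub1 φ ih =>
      exact absurd (hφ (Set.mem_insert _ _)) frag_notmem.2.2.1
  | nebot =>
      exact absurd (hφ rfl) frag_notmem.2.2.2

/-- The empty team satisfies every formula of the fragment. -/
private lemma empty_sat (φ : TeamForm α)
    (hφ : φ.exts ⊆ {TExt.incl, TExt.bdis}) :
    ∀ i, TeamForm.sat (∅ : Set (Trace α)) i φ := by
  induction φ with
  | pos p => intro i t ht; exact absurd ht (Set.notMem_empty t)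
  | neg p => intro i t ht; exact absurd ht (Set.notMem_empty t)
  | lor φ ψ ih1 ih2 =>
      intro i
      exact ⟨∅, ∅, by simp, ih1 (fun x hx => hφ (Set.mem_union_left _ hx)) i,
        ih2 (fun x hx => hφ (Set.mem_union_right _ hx)) i⟩
  | land φ ψ ih1 ih2 =>
      intro i
      exact ⟨ih1 (fun x hx => hφ (Set.mem_union_left _ hx)) i,
        ih2 (fun x hx => hφ (Set.mem_union_right _ hx)) i⟩
  | next φ ih => intro i; exact ih hφ (i + 1)
  | luntil φ ψ ih1 ih2 =>
      intro i
      exact ⟨i, le_rfl, ih2 (fun x hx => hφ (Set.mem_union_right _ hx)) i,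
        fun m h1 h2 => ih1 (fun x hx => hφ (Set.mem_union_left _ hx)) m⟩
  | wuntil φ ψ ih1 ih2 =>
      intro i k hik
      exact Or.inl (ih1 (fun x hx => hφ (Set.mem_union_left _ hx)) k)
  | bdis φ ψ ih1 ih2 =>
      intro i
      have hsub : φ.exts ∪ ψ.exts ⊆ {TExt.incl, TExt.bdis} :=
        fun x hx => hφ (Set.mem_insert_of_mem _ hx)
      exact Or.inl (ih1 (fun x hx => hsub (Set.mem_union_left _ hx)) i)
  | bneg φ ih => exact absurd (hφ (Set.mem_insert _ _)) frag_notmem.1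
  | incl ps => intro i t ht; exact absurd ht (Set.notMem_empty t)
  | asub φ ih => exact absurd (hφ (Set.mem_insert _ _)) frag_notmem.2.1
  | asub1 φ ih => exact absurd (hφ (Set.mem_insert _ _)) frag_notmem.2.2.1
  | nebot => exact absurd (hφ rfl) frag_notmem.2.2.2

/-- Flatness on singletons: singleton team satisfaction equals LTL satisfaction
of the star translation. -/
private lemma single_sat [Inhabited α] (φ : TeamForm α)
    (hφ : φ.exts ⊆ {TExt.incl, TExt.bdis}) :
    ∀ (t : Trace α) (i : ℕ), TeamForm.sat {t} i φ ↔ LTLForm.sat t i (star φ) := by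
  induction φ with
  | pos p => intro t i; simp [TeamForm.sat, StarBlock.star, LTLForm.sat]
  | neg p => intro t i; simp [TeamForm.sat, StarBlock.star, LTLForm.sat]
  | lor φ ψ ih1 ih2 =>
      intro t i
      have hu : φ.exts ⊆ {TExt.incl, TExt.bdis} :=
        fun x hx => hφ (Set.mem_union_left _ hx)
      have hv : ψ.exts ⊆ {TExt.incl, TExt.bdis} :=
        fun x hx => hφ (Set.mem_union_right _ hx)
      simp only [StarBlock.star, LTLForm.sat, ← ih1 hu, ← ih2 hv]
      constructor
      · rintro ⟨T₁, T₂, hun, h1, h2⟩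
        have ht : t ∈ T₁ ∪ T₂ := hun ▸ rfl
        rcases ht with ht | ht
        · left
          have : T₁ = {t} := by
            apply Set.eq_of_subset_of_subset
            · intro s hs
              have : s ∈ T₁ ∪ T₂ := Or.inl hs
              rw [hun] at this; exact this
            · intro s hs; rw [Set.mem_singleton_iff] at hs; subst hs; exact ht
          rwa [this] at h1
        · right
          have : T₂ = {t} := by
            apply Set.eq_of_subset_of_subset
            · intro s hs
              have : s ∈ T₁ ∪ T₂ := Or.inr hs
              rw [hun] at this; exact this
            · intro s hs; rw [Set.mem_singleton_iff] at hs; subst hs; exact ht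
          rwa [this] at h2
      · rintro (h | h)
        · exact ⟨{t}, ∅, by simp, h, empty_sat ψ hv i⟩
        · exact ⟨∅, {t}, by simp, empty_sat φ hu i, h⟩
  | land φ ψ ih1 ih2 =>
      intro t i
      simp only [StarBlock.star, LTLForm.sat, TeamForm.sat,
        ih1 (fun x hx => hφ (Set.mem_union_left _ hx)),
        ih2 (fun x hx => hφ (Set.mem_union_right _ hx))]
  | next φ ih =>
      intro t i
      simp only [StarBlock.star, LTLForm.sat, TeamForm.sat, ih hφ]
  | luntil φ ψ ih1 ih2 =>
      intro t i
      simp only [StarBlock.star, LTLForm.sat, TeamForm.sat,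
        ih1 (fun x hx => hφ (Set.mem_union_left _ hx)),
        ih2 (fun x hx => hφ (Set.mem_union_right _ hx))]
  | wuntil φ ψ ih1 ih2 =>
      intro t i
      simp only [StarBlock.star, LTLForm.sat, TeamForm.sat,
        ih1 (fun x hx => hφ (Set.mem_union_left _ hx)),
        ih2 (fun x hx => hφ (Set.mem_union_right _ hx))]
  | bdis φ ψ ih1 ih2 =>
      intro t i
      have hsub : φ.exts ∪ ψ.exts ⊆ {TExt.incl, TExt.bdis} :=
        fun x hx => hφ (Set.mem_insert_of_mem _ hx)
      simp only [StarBlock.star, LTLForm.sat, TeamForm.sat,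
        ih1 (fun x hx => hsub (Set.mem_union_left _ hx)),
        ih2 (fun x hx => hsub (Set.mem_union_right _ hx))]
  | bneg φ ih => exact absurd (hφ (Set.mem_insert _ _)) frag_notmem.1
  | incl ps =>
      intro t i
      simp only [StarBlock.star, bigAndL_sat, TeamForm.sat]
      constructor
      · intro h ψ hψ
        rw [List.mem_map] at hψ
        obtain ⟨p, hp, rfl⟩ := hψ
        rw [iffL_sat]
        obtain ⟨t', ht', h'⟩ := h t rfl
        rw [Set.mem_singleton_iff] at ht'
        subst ht'
        exact h' p hp
      · intro h s hs
        rw [Set.mem_singleton_iff] at hs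
        subst hs
        refine ⟨s, rfl, fun p hp => ?_⟩
        have := h (iffL p.1 p.2) (List.mem_map.mpr ⟨p, hp, rfl⟩)
        rwa [iffL_sat] at this
  | asub φ ih => exact absurd (hφ (Set.mem_insert _ _)) frag_notmem.2.1
  | asub1 φ ih => exact absurd (hφ (Set.mem_insert _ _)) frag_notmem.2.2.1
  | nebot => exact absurd (hφ rfl) frag_notmem.2.2.2


/-- For every `TeamLTL(⊆,⩔)`-formula `φ`: `φ` is not satisfiable
(by any nonempty team) if and only if `φ` is 1-coherent and the LTL formula
`φ*` is not satisfiable in the sense of LTL. -/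
theorem stmt_9 [Inhabited α] (φ : TeamForm α)
    (hφ : φ.exts ⊆ {TExt.incl, TExt.bdis}) :
    (¬ ∃ T : Set (Trace α), T.Nonempty ∧ TeamForm.sat T 0 φ) ↔
      (OneCoherent φ ∧ ¬ ∃ t : Trace α, LTLForm.sat t 0 (star φ)) := by
  constructor
  · intro h
    have hall : ∀ (T : Set (Trace α)) (i : ℕ), T.Nonempty → ¬ TeamForm.sat T i φ := by
      intro T i hne hsat
      have h0 : TeamForm.sat T (0 + i) φ := by simpa using hsat
      have := team_shift i φ hφ T 0 h0
      exact h ⟨sh i '' T, hne.image _, this⟩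
    refine ⟨?_, ?_⟩
    · intro T i
      rcases T.eq_empty_or_nonempty with rfl | hne
      · simp [empty_sat φ hφ i]
      · constructor
        · intro hsat; exact absurd hsat (hall T i hne)
        · intro hs
          obtain ⟨t, ht⟩ := hne
          exact absurd (hs t ht) (hall {t} i ⟨t, rfl⟩)
    · rintro ⟨t, ht⟩
      have : TeamForm.sat {t} 0 φ := (single_sat φ hφ t 0).mpr ht
      exact h ⟨{t}, ⟨t, rfl⟩, this⟩
  · rintro ⟨hc, hs⟩ ⟨T, ⟨t, ht⟩, hsat⟩
    have := (hc T 0).mp hsat t ht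
    exact hs ⟨t, (single_sat φ hφ t 0).mp this⟩


end Stmt9
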